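/- arXiv:2408.15478 — 2 statements merged into one kernel-verified Lean document; each statement's English description precedes it below -/
import Mathlib

section
/- The kernel of the homomorphism π : J₃ → S₃ (sending s₁₂ to the transposition (1 2), s₂₃ to (2 3), and s₁₃ to (1 3)) equals the cyclic subgroup of J₃ generated by the single element (s₁₂·s₁₃)³. -/
/-- Generators of the cactus group `J₃`. -/
inductive CactusGen : Type
  | s12 | s23 | s13
  deriving DecidableEq

open FreeGroup in
/-- Relators of the cactus group `J₃`:
`s₁₂² = s₂₃² = s₁₃² = 1`, `s₁₂·s₁₃ = s₁₃·s₂₃`, `s₂₃·s₁₃ = s₁₃·s₁₂`. -/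
def cactusRels : Set (FreeGroup CactusGen) :=
  { of .s12 * of .s12,
    of .s23 * of .s23,
    of .s13 * of .s13,
    of .s12 * of .s13 * (of .s13 * of .s23)⁻¹,
    of .s23 * of .s13 * (of .s13 * of .s12)⁻¹ }

/-- The cactus group `J₃` as a presented group. -/
abbrev J3 : Type := PresentedGroup cactusRels

def s12 : J3 := PresentedGroup.of .s12
def s23 : J3 := PresentedGroup.of .s23
def s13 : J3 := PresentedGroup.of .s13

/-- The images of the generators in the symmetric group on three letters:
`s₁₂ ↦ (1 2)`, `s₂₃ ↦ (2 3)`, `s₁₃ ↦ (1 3)`. -/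
def genPerm : CactusGen → Equiv.Perm (Fin 3)
  | .s12 => Equiv.swap 0 1
  | .s23 => Equiv.swap 1 2
  | .s13 => Equiv.swap 0 2

theorem cactusRels_hold : ∀ r ∈ cactusRels, FreeGroup.lift genPerm r = 1 := by
  intro r hr
  simp only [cactusRels, Set.mem_insert_iff, Set.mem_singleton_iff] at hr
  rcases hr with h | h | h | h | h <;> subst h <;>
    simp only [map_mul, map_inv, FreeGroup.lift_apply_of] <;> decide

/-- The canonical projection `π : J₃ → S₃`; its kernel is the pure cactus group `PJ₃`. -/
def piJ3 : J3 →* Equiv.Perm (Fin 3) := PresentedGroup.toGroup cactusRels_hold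

/-!
The relation `s₂₃·s₁₃ = s₁₃·s₁₂` gives `s₂₃ = s₁₃·s₁₂·s₁₃`, so `J₃` is generated by the two
involutions `s₁₂`, `s₁₃`; hence every element is `t^k` or `s₁₂·t^k` with `t = s₁₂·s₁₃`.
Now `π t` is a 3-cycle and `π (s₁₂·t^k)` is an odd permutation, so the kernel consists of
the `t^k` with `3 ∣ k`.
-/

theorem exists_eq_zpow_or_eq_mul_zpow_of_mem_closure_pair {G : Type*} [Group G] {a b : G}
    (ha : a * a = 1) (hb : b * b = 1) {g : G} (hg : g ∈ Subgroup.closure {a, b}) :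
    ∃ k : ℤ, g = (a * b) ^ k ∨ g = a * (a * b) ^ k := by
  have hmul : ∀ x ∈ ({a, b} : Set G), ∀ y : G,
      (∃ k : ℤ, y = (a * b) ^ k ∨ y = a * (a * b) ^ k) →
      ∃ k : ℤ, x * y = (a * b) ^ k ∨ x * y = a * (a * b) ^ k := by
    rintro x (rfl | rfl) y ⟨k, rfl | rfl⟩
    · exact ⟨k, .inr rfl⟩
    · exact ⟨k, .inl (by rw [← mul_assoc, ha, one_mul])⟩
    · exact ⟨1 + k, .inr (by rw [zpow_one_add, ← mul_assoc, ← mul_assoc, ha, one_mul])⟩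
    · refine ⟨-1 + k, .inl ?_⟩
      rw [zpow_add, zpow_neg_one, mul_inv_rev, inv_eq_of_mul_eq_one_left ha,
        inv_eq_of_mul_eq_one_left hb, mul_assoc]
  induction hg using Subgroup.closure_induction_left with
  | one => exact ⟨0, .inl (zpow_zero _).symm⟩
  | mul_left x hx y _ ih => exact hmul x hx y ih
  | inv_mul_cancel x hx y _ ih =>
    obtain rfl | rfl := hx
    · rw [inv_eq_of_mul_eq_one_left ha]; exact hmul _ (.inl rfl) y ih
    · rw [inv_eq_of_mul_eq_one_left hb]; exact hmul _ (.inr rfl) y ih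

theorem s12_mul_self : s12 * s12 = 1 :=
  PresentedGroup.one_of_mem (by simp [cactusRels])

theorem s13_mul_self : s13 * s13 = 1 :=
  PresentedGroup.one_of_mem (by simp [cactusRels])

theorem s23_eq_s13_mul_s12_mul_s13 : s23 = s13 * s12 * s13 := by
  have h : s23 * s13 = s13 * s12 := PresentedGroup.mk_eq_mk_of_mul_inv_mem (by simp [cactusRels])
  rw [← h, mul_assoc, s13_mul_self, mul_one]

theorem closure_s12_s13 : Subgroup.closure {s12, s13} = ⊤ := by
  refine eq_top_iff.mpr fun g _ => PresentedGroup.generated_by _ _ (fun j => ?_) g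
  have h12 : s12 ∈ Subgroup.closure {s12, s13} := Subgroup.subset_closure (.inl rfl)
  have h13 : s13 ∈ Subgroup.closure {s12, s13} := Subgroup.subset_closure (.inr rfl)
  cases j
  · exact h12
  · change s23 ∈ _
    exact s23_eq_s13_mul_s12_mul_s13 ▸ mul_mem (mul_mem h13 h12) h13
  · exact h13

theorem exists_eq_zpow_or_eq_s12_mul_zpow (g : J3) :
    ∃ k : ℤ, g = (s12 * s13) ^ k ∨ g = s12 * (s12 * s13) ^ k :=
  exists_eq_zpow_or_eq_mul_zpow_of_mem_closure_pair s12_mul_self s13_mul_self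
    (closure_s12_s13 ▸ Subgroup.mem_top g)

theorem piJ3_s12 : piJ3 s12 = Equiv.swap 0 1 := PresentedGroup.toGroup.of cactusRels_hold

theorem piJ3_s13 : piJ3 s13 = Equiv.swap 0 2 := PresentedGroup.toGroup.of cactusRels_hold

theorem orderOf_piJ3_s12_mul_s13 : orderOf (piJ3 (s12 * s13)) = 3 := by
  rw [map_mul, piJ3_s12, piJ3_s13]
  have : Fact (Nat.Prime 3) := ⟨Nat.prime_three⟩
  exact orderOf_eq_prime (by decide) (by decide)

theorem sign_piJ3_s12_mul_zpow (k : ℤ) :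
    Equiv.Perm.sign (piJ3 (s12 * (s12 * s13) ^ k)) = -1 := by
  simp [piJ3_s12, piJ3_s13, Equiv.Perm.sign_swap']

/-- the kernel of `π : J₃ → S₃` is the cyclic subgroup generated by
`(s₁₂·s₁₃)³`. -/
theorem ker_piJ3_eq_zpowers :
    MonoidHom.ker piJ3 = Subgroup.zpowers ((s12 * s13) ^ 3) := by
  refine le_antisymm (fun g hg => ?_) ?_
  · obtain ⟨k, rfl | rfl⟩ := exists_eq_zpow_or_eq_s12_mul_zpow g
    · obtain ⟨m, rfl⟩ : (3 : ℤ) ∣ k := by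
        have := orderOf_dvd_iff_zpow_eq_one.mpr ((map_zpow piJ3 _ k).symm.trans hg)
        rwa [orderOf_piJ3_s12_mul_s13, Nat.cast_ofNat] at this
      exact ⟨m, by dsimp only; rw [zpow_mul]; norm_cast⟩
    · have hsign := sign_piJ3_s12_mul_zpow k
      rw [MonoidHom.mem_ker.mp hg, map_one] at hsign
      exact absurd hsign (by decide)
  · rw [Subgroup.zpowers_le, MonoidHom.mem_ker, map_pow, map_mul, piJ3_s12, piJ3_s13]
    decide
end

section
/- The element (s₁₂·s₁₃)³ of the cactus group J₃ has infinite order. -/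
/-!
Sending `s₁₂, s₁₃, s₂₃` to the reflections `sr 0, sr 1, sr 2` of the dihedral group `Dₙ` respects
the cactus relations, since `sr i * sr j = r (j - i)` depends only on `j - i`. Under this map
`s₁₂·s₁₃` becomes the rotation `r 1`, which has infinite order in the infinite dihedral group `D₀`;
hence so do `s₁₂·s₁₃` and all its nonzero powers.
-/

open DihedralGroup

def cactusGenToDihedral (n : ℕ) : CactusGen → DihedralGroup n
  | .s12 => sr 0
  | .s13 => sr 1
  | .s23 => sr 2

theorem cactusGenToDihedral_rels (n : ℕ) :
    ∀ r ∈ cactusRels, FreeGroup.lift (cactusGenToDihedral n) r = 1 := by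
  simp only [cactusRels, Set.mem_insert_iff, Set.mem_singleton_iff, forall_eq_or_imp, forall_eq]
  simp only [map_mul, map_inv, FreeGroup.lift_apply_of, cactusGenToDihedral, sr_mul_sr, inv_r,
    r_mul_r, ← r_zero]
  refine ⟨?_, ?_, ?_, ?_, ?_⟩ <;> congr 1 <;> ring

def J3.toDihedral (n : ℕ) : J3 →* DihedralGroup n :=
  PresentedGroup.toGroup (cactusGenToDihedral_rels n)

theorem J3.toDihedral_s12_mul_s13 (n : ℕ) : J3.toDihedral n (s12 * s13) = r 1 := by
  simp only [J3.toDihedral, s12, s13, map_mul, PresentedGroup.toGroup.of, cactusGenToDihedral,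
    sr_mul_sr, sub_zero]

theorem not_isOfFinOrder_r_one : ¬ IsOfFinOrder (r 1 : DihedralGroup 0) := by
  rw [← orderOf_ne_zero_iff, orderOf_r_one, not_not]

theorem not_isOfFinOrder_s12_mul_s13 : ¬ IsOfFinOrder (s12 * s13) := fun h =>
  not_isOfFinOrder_r_one (J3.toDihedral_s12_mul_s13 0 ▸ (J3.toDihedral 0).isOfFinOrder h)

/-- the element `(s₁₂·s₁₃)³` of `J₃` has infinite order. -/
theorem not_isOfFinOrder : ¬ IsOfFinOrder ((s12 * s13) ^ 3) := fun h =>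
  not_isOfFinOrder_s12_mul_s13 (h.of_pow three_ne_zero)
end
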